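/- arXiv:2407.17210 — 2 statements merged into one kernel-verified Lean document; each statement's English description precedes it below -/
import Mathlib

section
/- Let X ⊆ ℝ^d contain at least two distinct points. Then the empty set is the bottom element of Lat^d(X), and Lat^d(X), ordered by inclusion, is an atomistic lattice: every element is the supremum of the atoms below it. -/
set_option linter.unusedSectionVars false
set_option linter.unnecessarySeqFocus false
set_option linter.unusedVariables false


/-- `ChLat X A` means that `A` belongs to the smallest sublattice of the lattice of
convex subsets of `ℝ^d` (with meet `∩` and join `A ∨ B = convexHull ℝ (A ∪ B)`)
containing the singleton `{x}` for every `x ∈ X`. -/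
inductive ChLat {d : ℕ} (X : Set (Fin d → ℝ)) : Set (Fin d → ℝ) → Prop
  | point : ∀ x ∈ X, ChLat X {x}
  | join : ∀ A B, ChLat X A → ChLat X B → ChLat X (convexHull ℝ (A ∪ B))
  | meet : ∀ A B, ChLat X A → ChLat X B → ChLat X (A ∩ B)

/-- `a` is an atom of `Lat^d(X)`: a nonempty element of the lattice such that the only
elements of the lattice below it are `∅` (the bottom) and `a` itself. -/
def ChAtom {d : ℕ} (X : Set (Fin d → ℝ)) (a : Set (Fin d → ℝ)) : Prop :=
  ChLat X a ∧ a ≠ ∅ ∧ ∀ B, ChLat X B → B ⊆ a → B = ∅ ∨ B = a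

variable {d : ℕ} {X : Set (Fin d → ℝ)}

theorem ChLat.convex {A : Set (Fin d → ℝ)} (hA : ChLat X A) : Convex ℝ A := by
  induction hA with
  | point x hx => exact convex_singleton x
  | join A B hA hB ihA ihB => exact convex_convexHull ℝ _
  | meet A B hA hB ihA ihB => exact ihA.inter ihB

theorem isCompact_convexJoin {E : Type*} [NormedAddCommGroup E] [NormedSpace ℝ E]
    {A B : Set E} (hA : IsCompact A) (hB : IsCompact B) :
    IsCompact (convexJoin ℝ A B) := by
  have : convexJoin ℝ A B =
      (fun p : ℝ × E × E => p.1 • p.2.1 + (1 - p.1) • p.2.2) ''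
        (Set.Icc (0:ℝ) 1 ×ˢ A ×ˢ B) := by
    ext z
    constructor
    · rw [mem_convexJoin]
      rintro ⟨a, ha, b, hb, u, u', hu, hu', huu', rfl⟩
      exact ⟨(u, a, b), ⟨⟨hu, by linarith⟩, ha, hb⟩, by simp; rw [show 1 - u = u' by linarith]⟩
    · rintro ⟨⟨u, a, b⟩, ⟨⟨hu0, hu1⟩, ha, hb⟩, rfl⟩
      rw [mem_convexJoin]
      exact ⟨a, ha, b, hb, u, 1 - u, hu0, by linarith, by ring, rfl⟩
  rw [this]
  exact (isCompact_Icc.prod (hA.prod hB)).image (by fun_prop)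

theorem ChLat.isCompact {A : Set (Fin d → ℝ)} (hA : ChLat X A) : IsCompact A := by
  induction hA with
  | point x hx => exact isCompact_singleton
  | join A B hA hB ihA ihB =>
    rcases A.eq_empty_or_nonempty with rfl | hAne
    · rw [Set.empty_union, hB.convex.convexHull_eq]; exact ihB
    rcases B.eq_empty_or_nonempty with rfl | hBne
    · rw [Set.union_empty, hA.convex.convexHull_eq]; exact ihA
    · rw [hA.convex.convexHull_union hB.convex hAne hBne]
      exact isCompact_convexJoin ihA ihB
  | meet A B hA hB ihA ihB => exact ihA.inter_right ihB.isClosed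

/-- piercing is downward closed under convexity -/
theorem mem_of_pierce {E : Type*} [AddCommGroup E] [Module ℝ E] {F : Set E}
    (hF : Convex ℝ F) {a p : E} (haF : a ∈ F) {ε γ : ℝ} (hε : 0 < ε)
    (h : a + ε • (a - p) ∈ F) (h0 : 0 ≤ γ) (hγ : γ ≤ ε) :
    a + γ • (a - p) ∈ F := by
  have key : (γ / ε) • (a + ε • (a - p)) + (1 - γ / ε) • a = a + γ • (a - p) := by
    have hε' : ε ≠ 0 := ne_of_gt hε
    match_scalars <;> field_simp <;> ring
  rw [← key]
  exact hF h haF (by positivity) (by rw [sub_nonneg]; exact div_le_one_of_le₀ hγ hε.le)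
    (by ring)

/-- Every point of a lattice element lies in a lattice subset in whose algebraic
relative interior it lies. -/
theorem chlat_ri {A : Set (Fin d → ℝ)} (hA : ChLat X A) :
    ∀ v ∈ A, ∃ F, ChLat X F ∧ F ⊆ A ∧ v ∈ F ∧
      ∀ w ∈ F, ∃ ε : ℝ, 0 < ε ∧ v + ε • (v - w) ∈ F := by
  induction hA with
  | point x hx =>
    rintro v (rfl : v = x)
    exact ⟨{v}, ChLat.point v hx, le_refl _, rfl, by
      rintro w (rfl : w = v); exact ⟨1, one_pos, by simp⟩⟩
  | meet A B hA hB ihA ihB =>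
    rintro v ⟨hvA, hvB⟩
    obtain ⟨FA, hFA, hFAs, hvFA, hpA⟩ := ihA v hvA
    obtain ⟨FB, hFB, hFBs, hvFB, hpB⟩ := ihB v hvB
    refine ⟨FA ∩ FB, ChLat.meet _ _ hFA hFB, Set.inter_subset_inter hFAs hFBs,
      ⟨hvFA, hvFB⟩, ?_⟩
    rintro w ⟨hwA, hwB⟩
    obtain ⟨εa, hεa, ha⟩ := hpA w hwA
    obtain ⟨εb, hεb, hb⟩ := hpB w hwB
    refine ⟨min εa εb, lt_min hεa hεb, ?_, ?_⟩
    · exact mem_of_pierce hFA.convex hvFA hεa ha (le_of_lt (lt_min hεa hεb)) (min_le_left _ _)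
    · exact mem_of_pierce hFB.convex hvFB hεb hb (le_of_lt (lt_min hεa hεb)) (min_le_right _ _)
  | join A B hA hB ihA ihB =>
    rcases A.eq_empty_or_nonempty with rfl | hAne
    · rw [Set.empty_union, hB.convex.convexHull_eq]; exact ihB
    rcases B.eq_empty_or_nonempty with rfl | hBne
    · rw [Set.union_empty, hA.convex.convexHull_eq]; exact ihA
    intro v hv
    rw [hA.convex.convexHull_union hB.convex hAne hBne, mem_convexJoin] at hv
    obtain ⟨a, ha, b, hb, u, u', hu, hu', huu', rfl⟩ := hv
    have hsubA : A ⊆ convexHull ℝ (A ∪ B) :=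
      Set.Subset.trans Set.subset_union_left (subset_convexHull ℝ _)
    have hsubB : B ⊆ convexHull ℝ (A ∪ B) :=
      Set.Subset.trans Set.subset_union_right (subset_convexHull ℝ _)
    rcases eq_or_lt_of_le hu with hu0 | hu0
    · -- u = 0, point is b
      obtain ⟨FB, hFB, hFBs, hvFB, hpB⟩ := ihB b hb
      have : u • a + u' • b = b := by rw [← hu0]; simp [show u' = 1 by linarith]
      rw [this]
      exact ⟨FB, hFB, hFBs.trans hsubB, hvFB, hpB⟩
    rcases eq_or_lt_of_le hu' with hu'0 | hu'0
    · obtain ⟨FA, hFA, hFAs, hvFA, hpA⟩ := ihA a ha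
      have : u • a + u' • b = a := by rw [← hu'0]; simp [show u = 1 by linarith]
      rw [this]
      exact ⟨FA, hFA, hFAs.trans hsubA, hvFA, hpA⟩
    -- main case : 0 < u, 0 < u'
    obtain ⟨FA, hFA, hFAs, hvFA, hpA⟩ := ihA a ha
    obtain ⟨FB, hFB, hFBs, hvFB, hpB⟩ := ihB b hb
    have hFAne : FA.Nonempty := ⟨a, hvFA⟩
    have hFBne : FB.Nonempty := ⟨b, hvFB⟩
    refine ⟨convexHull ℝ (FA ∪ FB), ChLat.join _ _ hFA hFB,
      convexHull_mono (Set.union_subset_union hFAs hFBs), ?_, ?_⟩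
    · exact (convex_convexHull ℝ (FA ∪ FB)).segment_subset
        (subset_convexHull ℝ _ (Set.mem_union_left _ hvFA))
        (subset_convexHull ℝ _ (Set.mem_union_right _ hvFB))
        ⟨u, u', hu, hu', huu', rfl⟩
    intro w hw
    rw [hFA.convex.convexHull_union hFB.convex hFAne hFBne, mem_convexJoin] at hw
    obtain ⟨p, hp, q, hq, s, s', hs, hs', hss', rfl⟩ := hw
    obtain ⟨εa, hεa, hpa⟩ := hpA p hp
    obtain ⟨εb, hεb, hpb⟩ := hpB q hq
    obtain ⟨ε, hε, hεu, hεu', hεa2, hεb2⟩ :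
        ∃ ε : ℝ, 0 < ε ∧ ε ≤ u/2 ∧ ε ≤ u'/2 ∧ ε ≤ εa*u/2 ∧ ε ≤ εb*u'/2 :=
      ⟨min (min (u/2) (u'/2)) (min (εa*u/2) (εb*u'/2)),
        lt_min (lt_min (by linarith) (by linarith)) (lt_min (by positivity) (by positivity)),
        le_trans (min_le_left _ _) (min_le_left _ _),
        le_trans (min_le_left _ _) (min_le_right _ _),
        le_trans (min_le_right _ _) (min_le_left _ _),
        le_trans (min_le_right _ _) (min_le_right _ _)⟩
    have hs1 : s ≤ 1 := by linarith
    have hs'1 : s' ≤ 1 := by linarith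
    set t1 : ℝ := (1+ε)*u - ε*s with ht1def
    set t2 : ℝ := (1+ε)*u' - ε*s' with ht2def
    have ht1 : u/2 ≤ t1 := by nlinarith
    have ht2 : u'/2 ≤ t2 := by nlinarith
    have ht1p : 0 < t1 := by linarith
    have ht2p : 0 < t2 := by linarith
    have hsum : t1 + t2 = 1 := by
      rw [ht1def, ht2def]; nlinarith [huu', hss']
    clear_value t1 t2
    set γa : ℝ := ε*s/t1 with hγadef
    set γb : ℝ := ε*s'/t2 with hγbdef
    have hγa0 : 0 ≤ γa := by rw [hγadef]; positivity
    have hγb0 : 0 ≤ γb := by rw [hγbdef]; positivity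
    clear_value γa γb
    have hγa : γa ≤ εa := by
      rw [hγadef, div_le_iff₀ ht1p]
      have f1 : ε*s ≤ ε*1 := mul_le_mul_of_nonneg_left hs1 hε.le
      have f2 : εa*(u/2) ≤ εa*t1 := mul_le_mul_of_nonneg_left ht1 hεa.le
      linarith [f1, f2, hεa2]
    have hγb : γb ≤ εb := by
      rw [hγbdef, div_le_iff₀ ht2p]
      have f1 : ε*s' ≤ ε*1 := mul_le_mul_of_nonneg_left hs'1 hε.le
      have f2 : εb*(u'/2) ≤ εb*t2 := mul_le_mul_of_nonneg_left ht2 hεb.le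
      linarith [f1, f2, hεb2]
    have ha' : a + γa • (a - p) ∈ FA := mem_of_pierce hFA.convex hvFA hεa hpa hγa0 hγa
    have hb' : b + γb • (b - q) ∈ FB := mem_of_pierce hFB.convex hvFB hεb hpb hγb0 hγb
    refine ⟨ε, hε, ?_⟩
    have key : (u • a + u' • b) + ε • ((u • a + u' • b) - (s • p + s' • q)) =
        t1 • (a + γa • (a - p)) + t2 • (b + γb • (b - q)) := by
      have e1 : t1 * γa = ε * s := by
        rw [hγadef]; field_simp
      have e2 : t2 * γb = ε * s' := by
        rw [hγbdef]; field_simp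
      rw [smul_add, smul_add, smul_smul, smul_smul, e1, e2, ht1def, ht2def]
      module
    rw [key]
    exact (convex_convexHull ℝ (FA ∪ FB))
      (subset_convexHull ℝ _ (Set.mem_union_left _ ha'))
      (subset_convexHull ℝ _ (Set.mem_union_right _ hb'))
      ht1p.le ht2p.le hsum

theorem chlat_extreme {A : Set (Fin d → ℝ)} (hA : ChLat X A) {v : Fin d → ℝ}
    (hv : v ∈ A.extremePoints ℝ) : ChLat X {v} := by
  obtain ⟨F, hF, hFs, hvF, hp⟩ := chlat_ri hA v hv.1
  have : F = {v} := by
    apply Set.eq_singleton_iff_unique_mem.2 ⟨hvF, fun w hw => ?_⟩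
    obtain ⟨ε, hε, hmem⟩ := hp w hw
    have hseg : v ∈ openSegment ℝ w (v + ε • (v - w)) := by
      refine ⟨ε/(1+ε), 1/(1+ε), by positivity, by positivity, ?_, ?_⟩
      · field_simp; ring
      · match_scalars <;> (field_simp; try ring)
    exact hv.2 (hFs hw) (hFs hmem) hseg
  rwa [this] at hF

theorem chlat_singleton_atom {v : Fin d → ℝ} (h : ChLat X {v}) : ChAtom X {v} :=
  ⟨h, Set.singleton_ne_empty v, fun B _ hB => Set.subset_singleton_iff_eq.1 hB⟩


/-- If `X` contains two distinct points, then `∅` is the bottom element of `Lat^d(X)`,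
and `Lat^d(X)` (ordered by inclusion) is atomistic: every element is the supremum of
the atoms below it. -/
theorem stmt5 {d : ℕ} (X : Set (Fin d → ℝ))
    (h2 : ∃ x ∈ X, ∃ y ∈ X, x ≠ y) :
    ChLat X (∅ : Set (Fin d → ℝ)) ∧
    (∀ A, ChLat X A → (∅ : Set (Fin d → ℝ)) ⊆ A) ∧
    (∀ A : {A : Set (Fin d → ℝ) // ChLat X A},
      IsLUB {a : {A : Set (Fin d → ℝ) // ChLat X A} | ChAtom X ↑a ∧ (a : Set (Fin d → ℝ)) ⊆ (A : Set (Fin d → ℝ))} A) := by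
  obtain ⟨x, hx, y, hy, hxy⟩ := h2
  have hempty : ChLat X (∅ : Set (Fin d → ℝ)) := by
    have := ChLat.meet _ _ (ChLat.point x hx) (ChLat.point y hy)
    rwa [Set.singleton_inter_eq_empty.2 (by simpa using hxy)] at this
  refine ⟨hempty, fun A _ => Set.empty_subset A, fun A => ⟨?_, ?_⟩⟩
  · rintro a ⟨-, hsub⟩
    exact hsub
  · rintro B hB
    show (A : Set (Fin d → ℝ)) ⊆ (B : Set (Fin d → ℝ))
    have hAeq : closure (convexHull ℝ ((A : Set (Fin d → ℝ)).extremePoints ℝ)) = ↑A :=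
      closure_convexHull_extremePoints A.2.isCompact A.2.convex
    have hHull : convexHull ℝ ((A : Set (Fin d → ℝ)).extremePoints ℝ) ⊆ ↑B := by
      apply convexHull_min ?_ B.2.convex
      intro v hv
      have hvA : v ∈ (A : Set (Fin d → ℝ)) := extremePoints_subset hv
      have hvLat : ChLat X {v} := chlat_extreme A.2 hv
      have : (⟨{v}, hvLat⟩ : {A : Set (Fin d → ℝ) // ChLat X A}) ≤ B :=
        hB ⟨chlat_singleton_atom hvLat, Set.singleton_subset_iff.2 hvA⟩
      exact this rfl
    calc (A : Set (Fin d → ℝ)) = closure (convexHull ℝ ((A : Set (Fin d → ℝ)).extremePoints ℝ)) :=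
          hAeq.symm
      _ ⊆ closure ↑B := closure_mono hHull
      _ = ↑B := B.2.isCompact.isClosed.closure_eq
end

section
/- Let X ⊆ ℝ² be in B position: X contains five distinct points a, b, c, d, e such that b lies strictly between a and c, the points d and e both lie strictly on the same side of the line through a and c, and d, e, b are not collinear. Then the lattice Lat²(X) is infinite. -/
lemma chlat_image {X : Set (Fin 2 → ℝ)} {A : Set (Fin 2 → ℝ)}
    (φ : (Fin 2 → ℝ) ≃ᵃ[ℝ] (Fin 2 → ℝ)) (h : ChLat X A) : ChLat (φ '' X) (φ '' A) := by
  induction h with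
  | point x hx => rw [Set.image_singleton]; exact ChLat.point _ (Set.mem_image_of_mem _ hx)
  | join A B hA hB ihA ihB =>
      have : (φ : (Fin 2 → ℝ) → (Fin 2 → ℝ)) '' (convexHull ℝ (A ∪ B))
          = convexHull ℝ ((φ '' A) ∪ (φ '' B)) := by
        rw [← Set.image_union]
        exact φ.toAffineMap.image_convexHull (A ∪ B)
      rw [this]; exact ChLat.join _ _ ihA ihB
  | meet A B hA hB ihA ihB =>
      rw [Set.image_inter φ.injective]; exact ChLat.meet _ _ ihA ihB

lemma chlat_transfer {X : Set (Fin 2 → ℝ)} (φ : (Fin 2 → ℝ) ≃ᵃ[ℝ] (Fin 2 → ℝ))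
    (h : {A : Set (Fin 2 → ℝ) | ChLat (φ '' X) A}.Infinite) :
    {A : Set (Fin 2 → ℝ) | ChLat X A}.Infinite := by
  have hinj : Function.Injective (Set.image (φ.symm : (Fin 2 → ℝ) → (Fin 2 → ℝ))) :=
    Set.image_injective.2 φ.symm.injective
  have h2 := h.image (hinj.injOn)
  refine h2.mono ?_
  rintro B ⟨A, hA, rfl⟩
  have := chlat_image φ.symm hA
  rw [Set.image_image] at this; simpa using this

lemma chlat_segment {X : Set (Fin 2 → ℝ)} {x y : Fin 2 → ℝ}
    (hx : ChLat X {x}) (hy : ChLat X {y}) : ChLat X (segment ℝ x y) := by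
  have := ChLat.join _ _ hx hy
  rwa [Set.singleton_union, convexHull_pair] at this

lemma chlat_cross {X : Set (Fin 2 → ℝ)} {x y z w m : Fin 2 → ℝ}
    (hx : ChLat X {x}) (hy : ChLat X {y}) (hz : ChLat X {z}) (hw : ChLat X {w})
    (hm : segment ℝ x y ∩ segment ℝ z w = {m}) : ChLat X {m} := by
  have := ChLat.meet _ _ (chlat_segment hx hy) (chlat_segment hz hw)
  rwa [hm] at this


lemma seg_mem_iff {p q z : Fin 2 → ℝ} : z ∈ segment ℝ p q ↔
    ∃ θ : ℝ, 0 ≤ θ ∧ θ ≤ 1 ∧ z 0 = (1-θ)*p 0 + θ*q 0 ∧ z 1 = (1-θ)*p 1 + θ*q 1 := by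
  rw [segment_eq_image]
  constructor
  · rintro ⟨θ, ⟨h0, h1⟩, rfl⟩
    exact ⟨θ, h0, h1, by simp, by simp⟩
  · rintro ⟨θ, h0, h1, hz0, hz1⟩
    refine ⟨θ, ⟨h0, h1⟩, ?_⟩
    funext i
    fin_cases i
    · simpa using hz0.symm
    · simpa using hz1.symm


lemma cross1 (δ u v t : ℝ) (hδ : 0 < δ) (hu : 0 < u) (hv : 0 < v)
    (hline : δ < δ*u+v) (ht0 : 0 ≤ t) (htv : t < v) (htδ : t < δ) :
    segment ℝ ![u,v] ![0,t] ∩ segment ℝ ![0,δ] ![1,0]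
      = {![u*(δ-t)/(δ*u+v-t), δ*(v-(1-u)*t)/(δ*u+v-t)]} := by
  have hden : 0 < δ*u+v-t := by linarith
  ext z
  simp only [Set.mem_inter_iff, Set.mem_singleton_iff, seg_mem_iff]
  constructor
  · rintro ⟨⟨θ, hθ0, hθ1, hz0, hz1⟩, ⟨σ, hσ0, hσ1, hw0, hw1⟩⟩
    simp only [Matrix.cons_val_zero, Matrix.cons_val_one, Matrix.head_cons] at hz0 hz1 hw0 hw1
    have hE : (1-θ)*v + θ*t = (1-((1-θ)*u + θ*0))*δ := by
      rw [← hz0, ← hz1, hw1, hw0]; ring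
    have hθ : θ = (δ*u+v-δ)/(δ*u+v-t) := by
      rw [eq_div_iff hden.ne']
      linear_combination -hE
    have hz0' : z 0 = u*(δ-t)/(δ*u+v-t) := by
      rw [hz0, hθ]; field_simp; ring
    have hz1' : z 1 = δ*(v-(1-u)*t)/(δ*u+v-t) := by
      rw [hz1, hθ]; field_simp; ring
    funext i
    fin_cases i
    · simpa using hz0'
    · simpa using hz1'
  · rintro rfl
    constructor
    · refine ⟨(δ*u+v-δ)/(δ*u+v-t), ?_, ?_, ?_, ?_⟩
      · apply div_nonneg (by linarith) hden.le
      · rw [div_le_one hden]; linarith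
      · simp; have : u * δ + v - t ≠ 0 := by linarith
        field_simp; ring
      · simp; field_simp; ring
    · refine ⟨u*(δ-t)/(δ*u+v-t), ?_, ?_, ?_, ?_⟩
      · apply div_nonneg (by nlinarith) hden.le
      · rw [div_le_one hden]; nlinarith
      · simp
      · simp; field_simp; ring

lemma cross2 (α δ q0 q1 : ℝ) (hα : 0 < α) (hδ : 0 < δ) (hq0 : 0 < q0) (hq1 : 0 ≤ q1)
    (hle : α*q1/(α+q0) ≤ δ) :
    segment ℝ ![-α,0] ![q0,q1] ∩ segment ℝ ![0,δ] ![0,0] = {![0, α*q1/(α+q0)]} := by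
  have hden : 0 < α + q0 := by linarith
  ext z
  simp only [Set.mem_inter_iff, Set.mem_singleton_iff, seg_mem_iff]
  constructor
  · rintro ⟨⟨θ, hθ0, hθ1, hz0, hz1⟩, ⟨σ, hσ0, hσ1, hw0, hw1⟩⟩
    simp only [Matrix.cons_val_zero, Matrix.cons_val_one, Matrix.head_cons] at hz0 hz1 hw0 hw1
    have hz0' : z 0 = 0 := by rw [hw0]; ring
    have hθ : θ = α/(α+q0) := by
      have : (1-θ)*(-α) + θ*q0 = 0 := by rw [← hz0, hz0']
      rw [eq_div_iff hden.ne']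
      linear_combination this
    have hz1' : z 1 = α*q1/(α+q0) := by
      rw [hz1, hθ]; field_simp; ring
    funext i
    fin_cases i
    · simpa using hz0'
    · simpa using hz1'
  · rintro rfl
    constructor
    · refine ⟨α/(α+q0), by positivity, ?_, ?_, ?_⟩
      · rw [div_le_one hden]; linarith
      · simp; field_simp; ring
      · simp; field_simp
    · refine ⟨1 - α*q1/(α+q0)/δ, ?_, ?_, by simp, ?_⟩
      · have : α*q1/(α+q0)/δ ≤ 1 := by rw [div_le_one hδ]; exact hle
        linarith
      · have : 0 ≤ α*q1/(α+q0)/δ := by positivity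
        linarith
      · simp; field_simp

lemma core (X : Set (Fin 2 → ℝ)) (α δ u v : ℝ) (hα : 0 < α) (hδ : 0 < δ)
    (hu : 0 < u) (hv : 0 < v) (hline : δ < δ*u + v)
    (hA : ChLat X {![-α,0]}) (hB : ChLat X {![0,0]}) (hC : ChLat X {![1,0]})
    (hD : ChLat X {![0,δ]}) (hE : ChLat X {![u,v]}) :
    {A : Set (Fin 2 → ℝ) | ChLat X A}.Infinite := by
  have hau : (0:ℝ) < α + u := by linarith
  set f : ℝ → ℝ := fun t => α*δ*(v-(1-u)*t) / (α*δ*u + α*v + u*δ - (α+u)*t) with hf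
  set m : ℝ := min (α*v/(α+u)) δ with hm
  have hm0 : 0 < m := lt_min (by positivity) hδ
  have step : ∀ t : ℝ, 0 ≤ t → t < m → ChLat X {![0,t]} →
      t < f t ∧ f t < m ∧ ChLat X {![0, f t]} := by
    intro t ht0 htm hP
    have hty : t < α*v/(α+u) := lt_of_lt_of_le htm (min_le_left _ _)
    have htδ : t < δ := lt_of_lt_of_le htm (min_le_right _ _)
    have hty' : (α+u)*t < α*v := by
      rw [lt_div_iff₀ hau] at hty; linarith
    have htv : t < v := by nlinarith
    have hden : (0:ℝ) < δ*u+v-t := by nlinarith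
    have hD2 : (0:ℝ) < α*δ*u + α*v + u*δ - (α+u)*t := by nlinarith
    have hnum : (0:ℝ) < v - (1-u)*t := by nlinarith [mul_nonneg hu.le ht0]
    have hq : ChLat X {![u*(δ-t)/(δ*u+v-t), δ*(v-(1-u)*t)/(δ*u+v-t)]} :=
      chlat_cross hE hP hD hC (cross1 δ u v t hδ hu hv hline ht0 htv htδ)
    have hx0 : (0:ℝ) < u*(δ-t)/(δ*u+v-t) := by
      apply div_pos (by nlinarith) hden
    have hy0 : (0:ℝ) ≤ δ*(v-(1-u)*t)/(δ*u+v-t) := by positivity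
    have hft : α*(δ*(v-(1-u)*t)/(δ*u+v-t))/(α + u*(δ-t)/(δ*u+v-t)) = f t := by
      rw [hf]
      rw [div_eq_div_iff (by positivity) hD2.ne']
      field_simp
      ring
    have hflt : f t < δ := by
      rw [hf, div_lt_iff₀ hD2]
      nlinarith [mul_pos (mul_pos (mul_pos hδ hu) (show (0:ℝ) < α+1 by linarith))
        (show (0:ℝ) < δ - t by linarith)]
    have hfty : f t < α*v/(α+u) := by
      rw [hf, div_lt_div_iff₀ hD2 hau]
      nlinarith [mul_pos (mul_pos hα (show (0:ℝ) < δ*u+v-δ by linarith))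
        (show (0:ℝ) < α*v - (α+u)*t by linarith)]
    have htft : t < f t := by
      rw [hf, lt_div_iff₀ hD2]
      nlinarith [mul_pos (show (0:ℝ) < α*v - (α+u)*t by linarith)
        (show (0:ℝ) < δ - t by linarith)]
    refine ⟨htft, lt_min hfty hflt, ?_⟩
    have := chlat_cross hA hq hD hB
      (cross2 α δ _ _ hα hδ hx0 hy0 (by rw [hft]; exact hflt.le))
    rwa [hft] at this
  have main : ∀ n : ℕ, 0 ≤ f^[n] 0 ∧ f^[n] 0 < m ∧ ChLat X {![0, f^[n] 0]} := by
    intro n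
    induction n with
    | zero => exact ⟨le_refl _, by simpa using hm0, by simpa using hB⟩
    | succ n ih =>
      rw [Function.iterate_succ_apply']
      obtain ⟨h0, h1, h2⟩ := ih
      obtain ⟨s1, s2, s3⟩ := step _ h0 h1 h2
      exact ⟨le_of_lt (lt_of_le_of_lt h0 s1), s2, s3⟩
  have mono : StrictMono (fun n => f^[n] (0:ℝ)) := by
    apply strictMono_nat_of_lt_succ
    intro n
    rw [Function.iterate_succ_apply']
    exact (step _ (main n).1 (main n).2.1 (main n).2.2).1
  apply Set.infinite_of_injective_forall_mem
    (f := fun n : ℕ => ({![0, f^[n] 0]} : Set (Fin 2 → ℝ)))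
  case hi =>
    intro i j hij
    simp only [Set.singleton_eq_singleton_iff] at hij
    have := congrFun hij 1
    simp only [Matrix.cons_val_one, Matrix.head_cons] at this
    exact mono.injective this
  case hf =>
    intro n
    exact (main n).2.2

noncomputable section

def lmap (p q r s : ℝ) : (Fin 2 → ℝ) →ₗ[ℝ] (Fin 2 → ℝ) where
  toFun x := ![p * x 0 + q * x 1, r * x 0 + s * x 1]
  map_add' x y := by funext i; fin_cases i <;> simp <;> ring
  map_smul' c x := by funext i; fin_cases i <;> simp <;> ring

lemma lmap_apply (p q r s : ℝ) (x : Fin 2 → ℝ) :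
    lmap p q r s x = ![p * x 0 + q * x 1, r * x 0 + s * x 1] := rfl

def lequiv (p q r s : ℝ) (h : p*s - q*r ≠ 0) : (Fin 2 → ℝ) ≃ₗ[ℝ] (Fin 2 → ℝ) :=
  LinearEquiv.ofLinear (lmap p q r s)
    (lmap (s/(p*s-q*r)) (-q/(p*s-q*r)) (-r/(p*s-q*r)) (p/(p*s-q*r)))
    (by apply LinearMap.ext; intro x; funext i
        have h1 : s*p - r*q ≠ 0 := by contrapose! h; linarith
        have h2 : p*s - r*q ≠ 0 := by contrapose! h; linarith
        have h3 : s*p - q*r ≠ 0 := by contrapose! h; linarith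
        fin_cases i <;> simp [lmap_apply] <;> field_simp <;> ring)
    (by apply LinearMap.ext; intro x; funext i
        have h1 : s*p - r*q ≠ 0 := by contrapose! h; linarith
        have h2 : p*s - r*q ≠ 0 := by contrapose! h; linarith
        have h3 : s*p - q*r ≠ 0 := by contrapose! h; linarith
        fin_cases i <;> simp [lmap_apply] <;> field_simp <;> ring)

lemma lequiv_apply (p q r s : ℝ) (h : p*s - q*r ≠ 0) (x : Fin 2 → ℝ) :
    lequiv p q r s h x = ![p * x 0 + q * x 1, r * x 0 + s * x 1] := rfl

/-- singleton image helper -/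
lemma chlat_map_pt {X : Set (Fin 2 → ℝ)} (φ : (Fin 2 → ℝ) ≃ᵃ[ℝ] (Fin 2 → ℝ))
    {x y : Fin 2 → ℝ} (h : ChLat X {x}) (hxy : φ x = y) : ChLat (φ '' X) {y} := by
  have := chlat_image φ h
  rwa [Set.image_singleton, hxy] at this

lemma masterPos (X : Set (Fin 2 → ℝ)) (α u v : ℝ) (hα : 0 < α) (hu : 0 < u) (hv : 0 < v)
    (hA : ChLat X {![-α,0]}) (hB : ChLat X {![0,0]}) (hC : ChLat X {![1,0]})
    (hD : ChLat X {![0,1]}) (hE : ChLat X {![u,v]}) :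
    {A : Set (Fin 2 → ℝ) | ChLat X A}.Infinite := by
  have hau : (0:ℝ) < α + u := by linarith
  rcases lt_trichotomy (u+v) 1 with h | h | h
  · -- u+v < 1 : transform
    have hv1 : v < 1 := by linarith
    have hdet : (-1/α)*1 - (u/(α*v))*0 ≠ 0 := by
      simp; positivity
    set φ : (Fin 2 → ℝ) ≃ᵃ[ℝ] (Fin 2 → ℝ) := (lequiv (-1/α) (u/(α*v)) 0 1 hdet).toAffineEquiv
      with hφ
    have happ : ∀ x : Fin 2 → ℝ, φ x = ![(-1/α) * x 0 + (u/(α*v)) * x 1, x 1] := by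
      intro x
      rw [hφ]
      simp [lequiv_apply, lmap_apply]
    apply chlat_transfer φ
    apply core (φ '' X) (1/α) v (u/(α*v)) 1 (by positivity) hv (by positivity) one_pos
    · -- hline : v < v*(u/(α*v)) + 1
      have : v*(u/(α*v)) = u/α := by field_simp
      rw [this]; have : (0:ℝ) < u/α := by positivity
      linarith
    · exact chlat_map_pt φ hC (by rw [happ]; funext i; fin_cases i <;> simp <;> field_simp <;> ring)
    · exact chlat_map_pt φ hB (by rw [happ]; funext i; fin_cases i <;> simp)
    · exact chlat_map_pt φ hA (by rw [happ]; funext i; fin_cases i <;> simp <;> field_simp <;> ring)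
    · exact chlat_map_pt φ hE (by rw [happ]; funext i; fin_cases i <;> simp <;> field_simp <;> ring)
    · exact chlat_map_pt φ hD (by rw [happ]; funext i; fin_cases i <;> simp)
  · -- u+v = 1 : replace d by p₁
    have hv1 : v < 1 := by linarith
    have hle : α*v/(α+u) ≤ 1 := by
      rw [div_le_one hau]; nlinarith
    have hP : ChLat X {![0, α*v/(α+u)]} :=
      chlat_cross hA hE hD hB (cross2 α 1 u v hα one_pos hu hv.le hle)
    have hy1 : (0:ℝ) < α*v/(α+u) := by positivity
    apply core X α (α*v/(α+u)) u v hα hy1 hu hv ?_ hA hB hC hP hE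
    have h2 : α*v/(α+u)*(1-u) < v := by
      rw [div_mul_eq_mul_div, div_lt_iff₀ hau]
      nlinarith [mul_pos (mul_pos hu hv) hα, mul_pos hu hv]
    nlinarith [h2]
  · exact core X α 1 u v hα one_pos hu hv (by linarith) hA hB hC hD hE

lemma master (X : Set (Fin 2 → ℝ)) (α u v : ℝ) (hα : 0 < α) (hu : u ≠ 0) (hv : 0 < v)
    (hA : ChLat X {![-α,0]}) (hB : ChLat X {![0,0]}) (hC : ChLat X {![1,0]})
    (hD : ChLat X {![0,1]}) (hE : ChLat X {![u,v]}) :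
    {A : Set (Fin 2 → ℝ) | ChLat X A}.Infinite := by
  rcases hu.lt_or_gt with h | h
  · have hdet : (-1/α)*1 - 0*0 ≠ 0 := by simp; positivity
    set φ : (Fin 2 → ℝ) ≃ᵃ[ℝ] (Fin 2 → ℝ) := (lequiv (-1/α) 0 0 1 hdet).toAffineEquiv with hφ
    have happ : ∀ x : Fin 2 → ℝ, φ x = ![(-1/α) * x 0, x 1] := by
      intro x; rw [hφ]; simp [lequiv_apply, lmap_apply]
    apply chlat_transfer φ
    have hu' : (0:ℝ) < -u/α := by
      apply div_pos (by linarith) hα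
    apply masterPos (φ '' X) (1/α) (-u/α) v (by positivity) hu' hv
    · exact chlat_map_pt φ hC (by rw [happ]; funext i; fin_cases i <;> simp <;> field_simp)
    · exact chlat_map_pt φ hB (by rw [happ]; funext i; fin_cases i <;> simp)
    · exact chlat_map_pt φ hA (by rw [happ]; funext i; fin_cases i <;> simp <;> field_simp <;> ring)
    · exact chlat_map_pt φ hD (by rw [happ]; funext i; fin_cases i <;> simp)
    · exact chlat_map_pt φ hE (by rw [happ]; funext i; fin_cases i <;> simp [neg_div] <;> ring)
  · exact masterPos X α u v hα h hv hA hB hC hD hE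

set_option maxHeartbeats 1000000 in
/-- If `X ⊆ ℝ²` is in B position — it contains five distinct points `a,b,c,d,e` with
`b` strictly between `a` and `c`, with `d` and `e` strictly on the same side of the line
through `a` and `c`, and with `d,e,b` not collinear — then `Lat²(X)` is infinite. -/
theorem stmt11 (X : Set (Fin 2 → ℝ)) (a b c d e : Fin 2 → ℝ)
    (ha : a ∈ X) (hb : b ∈ X) (hc : c ∈ X) (hd : d ∈ X) (he : e ∈ X)
    (hdist : [a, b, c, d, e].Pairwise (· ≠ ·))
    (hbtw : Sbtw ℝ a b c)
    (hside : (affineSpan ℝ ({a, c} : Set (Fin 2 → ℝ))).SSameSide d e)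
    (hncol : ¬ Collinear ℝ ({d, e, b} : Set (Fin 2 → ℝ))) :
    {A : Set (Fin 2 → ℝ) | ChLat X A}.Infinite := by
  -- extract betweenness parameter
  have hseg : b ∈ segment ℝ a c := mem_segment_iff_wbtw.mpr hbtw.wbtw
  rw [segment_eq_image] at hseg
  obtain ⟨t, ⟨ht0, ht1⟩, hbt⟩ := hseg
  have ht0' : 0 < t := by
    rcases ht0.lt_or_eq with h | h
    · exact h
    · exfalso; apply hbtw.ne_left; rw [← hbt, ← h]; simp
  have ht1' : t < 1 := by
    rcases ht1.lt_or_eq with h | h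
    · exact h
    · exfalso; apply hbtw.ne_right; rw [← hbt, h]; simp
  set α : ℝ := t/(1-t) with hαdef
  have h1t : (0:ℝ) < 1 - t := by linarith
  have hα : 0 < α := div_pos ht0' h1t
  -- coordinates
  set w0 : ℝ := c 0 - b 0 with hw0def
  set w1 : ℝ := c 1 - b 1 with hw1def
  set z0 : ℝ := d 0 - b 0 with hz0def
  set z1 : ℝ := d 1 - b 1 with hz1def
  set Dt : ℝ := w0*z1 - w1*z0 with hDdef
  have hbt0 := congrFun hbt 0
  have hbt1 := congrFun hbt 1
  simp only [Pi.add_apply, Pi.smul_apply, smul_eq_mul] at hbt0 hbt1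
  have ha0 : a 0 - b 0 = -α * w0 := by
    rw [hαdef, hw0def]; field_simp; linear_combination hbt0
  have ha1 : a 1 - b 1 = -α * w1 := by
    rw [hαdef, hw1def]; field_simp; linear_combination hbt1
  -- b, c in the line
  have hbmem : b ∈ affineSpan ℝ ({a, c} : Set (Fin 2 → ℝ)) := hbtw.wbtw.mem_affineSpan
  have hcmem : c ∈ affineSpan ℝ ({a, c} : Set (Fin 2 → ℝ)) :=
    right_mem_affineSpan_pair ℝ a c
  -- nondegeneracy
  have hwne : ¬ (w0 = 0 ∧ w1 = 0) := by
    rintro ⟨h0, h1⟩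
    apply hbtw.ne_right
    funext i; fin_cases i
    · have : c 0 - b 0 = 0 := h0
      simp; linarith
    · have : c 1 - b 1 = 0 := h1
      simp; linarith
  have hD : Dt ≠ 0 := by
    intro hD0
    apply hside.2.1
    have hkw : ∃ κ : ℝ, z0 = κ * w0 ∧ z1 = κ * w1 := by
      by_cases hw0 : w0 = 0
      · have hw1 : w1 ≠ 0 := fun h => hwne ⟨hw0, h⟩
        refine ⟨z1/w1, ?_, by field_simp⟩
        have : w1 * z0 = 0 := by rw [hDdef] at hD0; linear_combination -hD0 + z1*hw0
        have hz00 : z0 = 0 := by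
          rcases mul_eq_zero.mp this with h | h
          · exact absurd h hw1
          · exact h
        rw [hz00, hw0]; ring
      · refine ⟨z0/w0, by field_simp, ?_⟩
        rw [hDdef] at hD0
        field_simp
        linear_combination hD0
    obtain ⟨κ, hκ0, hκ1⟩ := hkw
    have hdeq : d = κ • (c -ᵥ b) +ᵥ b := by
      funext i; fin_cases i
      · simp [vsub_eq_sub]
        have : d 0 - b 0 = κ * (c 0 - b 0) := hκ0
        linarith
      · simp [vsub_eq_sub]
        have : d 1 - b 1 = κ * (c 1 - b 1) := hκ1
        linarith
    rw [hdeq]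
    exact AffineSubspace.smul_vsub_vadd_mem _ κ hcmem hbmem hbmem
  -- coefficient extraction
  have hcoef : ∀ x y : ℝ, x*w0 + y*z0 = 0 → x*w1 + y*z1 = 0 → x = 0 ∧ y = 0 := by
    intro x y h0 h1
    have hx : x * Dt = 0 := by rw [hDdef]; linear_combination z1*h0 - z0*h1
    have hy : y * Dt = 0 := by rw [hDdef]; linear_combination w0*h1 - w1*h0
    exact ⟨by rcases mul_eq_zero.mp hx with h | h; exact h; exact absurd h hD,
           by rcases mul_eq_zero.mp hy with h | h; exact h; exact absurd h hD⟩
  -- e decomposition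
  set u : ℝ := ((e 0 - b 0)*z1 - (e 1 - b 1)*z0)/Dt with hudef
  set v : ℝ := (w0*(e 1 - b 1) - w1*(e 0 - b 0))/Dt with hvdef
  have he0 : e 0 - b 0 = u*w0 + v*z0 := by
    rw [hudef, hvdef]; field_simp; rw [hDdef]; ring
  have he1 : e 1 - b 1 = u*w1 + v*z1 := by
    rw [hudef, hvdef]; field_simp; rw [hDdef]; ring
  -- v > 0
  have hv : 0 < v := by
    obtain ⟨p₁, hp₁, p₂, hp₂, hray⟩ := hside.1
    have hr₁ : ∃ r : ℝ, r • (c -ᵥ a) = p₁ -ᵥ a := by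
      rw [← vadd_left_mem_affineSpan_pair]
      rwa [vsub_vadd]
    have hr₂ : ∃ r : ℝ, r • (c -ᵥ a) = p₂ -ᵥ a := by
      rw [← vadd_left_mem_affineSpan_pair]
      rwa [vsub_vadd]
    obtain ⟨r₁, hr₁⟩ := hr₁
    obtain ⟨r₂, hr₂⟩ := hr₂
    have hr₁0 := congrFun hr₁ 0
    have hr₁1 := congrFun hr₁ 1
    have hr₂0 := congrFun hr₂ 0
    have hr₂1 := congrFun hr₂ 1
    simp only [Pi.smul_apply, Pi.sub_apply, vsub_eq_sub, smul_eq_mul] at hr₁0 hr₁1 hr₂0 hr₂1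
    have hca0 : c 0 - a 0 = (1+α)*w0 := by linear_combination -ha0 - hw0def
    have hca1 : c 1 - a 1 = (1+α)*w1 := by linear_combination -ha1 - hw1def
    set β₁ : ℝ := r₁*(1+α) - α with hβ₁def
    set β₂ : ℝ := r₂*(1+α) - α with hβ₂def
    have hp₁0 : p₁ 0 - b 0 = β₁ * w0 := by rw [hβ₁def]; linear_combination -hr₁0 + r₁*hca0 + ha0
    have hp₁1 : p₁ 1 - b 1 = β₁ * w1 := by rw [hβ₁def]; linear_combination -hr₁1 + r₁*hca1 + ha1
    have hp₂0 : p₂ 0 - b 0 = β₂ * w0 := by rw [hβ₂def]; linear_combination -hr₂0 + r₂*hca0 + ha0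
    have hp₂1 : p₂ 1 - b 1 = β₂ * w1 := by rw [hβ₂def]; linear_combination -hr₂1 + r₂*hca1 + ha1
    rcases hray with hz | hz | ⟨s₁, s₂, hs₁, hs₂, hkey⟩
    · exfalso; apply hside.2.1
      rw [vsub_eq_zero_iff_eq] at hz
      rwa [hz]
    · exfalso; apply hside.2.2
      rw [vsub_eq_zero_iff_eq] at hz
      rwa [hz]
    · have hk0 := congrFun hkey 0
      have hk1 := congrFun hkey 1
      simp only [Pi.smul_apply, Pi.sub_apply, vsub_eq_sub, smul_eq_mul] at hk0 hk1
      have hxy := hcoef (s₂*β₂ - s₂*u - s₁*β₁) (s₁ - s₂*v) ?_ ?_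
      · have : s₁ = s₂ * v := by linarith [hxy.2]
        nlinarith
      · linear_combination hk0 + s₁*hz0def + s₁*hp₁0 + s₂*he0 - s₂*hp₂0
      · linear_combination hk1 + s₁*hz1def + s₁*hp₁1 + s₂*he1 - s₂*hp₂1
  -- u ≠ 0
  have hu : u ≠ 0 := by
    intro hu0
    apply hncol
    rw [collinear_iff_exists_forall_eq_smul_vadd]
    refine ⟨b, d - b, ?_⟩
    intro p hp
    simp only [Set.mem_insert_iff, Set.mem_singleton_iff] at hp
    rcases hp with rfl | rfl | rfl
    · exact ⟨1, by funext i; simp [vadd_eq_add]⟩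
    · refine ⟨v, ?_⟩
      funext i; fin_cases i
      · have h' := he0; rw [hu0] at h'
        simp [vadd_eq_add]; linear_combination h' + v*hz0def
      · have h' := he1; rw [hu0] at h'
        simp [vadd_eq_add]; linear_combination h' + v*hz1def
    · exact ⟨0, by funext i; simp [vadd_eq_add]⟩
  -- build the normalizing affine equivalence
  have hdet : (z1/Dt)*(w0/Dt) - (-z0/Dt)*(-w1/Dt) ≠ 0 := by
    have : (z1/Dt)*(w0/Dt) - (-z0/Dt)*(-w1/Dt) = 1/Dt := by
      field_simp
      linear_combination -hDdef
    rw [this]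
    simp [hD]
  set L : (Fin 2 → ℝ) ≃ₗ[ℝ] (Fin 2 → ℝ) := lequiv (z1/Dt) (-z0/Dt) (-w1/Dt) (w0/Dt) hdet
    with hLdef
  set φ : (Fin 2 → ℝ) ≃ᵃ[ℝ] (Fin 2 → ℝ) :=
    (AffineEquiv.constVAdd ℝ (Fin 2 → ℝ) (-b)).trans L.toAffineEquiv with hφdef
  have happ : ∀ x : Fin 2 → ℝ,
      φ x = ![(z1/Dt)*(x 0 - b 0) + (-z0/Dt)*(x 1 - b 1),
              (-w1/Dt)*(x 0 - b 0) + (w0/Dt)*(x 1 - b 1)] := by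
    intro x
    rw [hφdef]
    simp only [AffineEquiv.trans_apply, AffineEquiv.constVAdd_apply,
      LinearEquiv.coe_toAffineEquiv, hLdef, lequiv_apply]
    funext i; fin_cases i <;> simp [vadd_eq_add] <;> ring
  apply chlat_transfer φ
  apply master (φ '' X) α u v hα hu hv
  · refine chlat_map_pt φ (ChLat.point a ha) ?_
    rw [happ]; funext i; fin_cases i
    · simp; field_simp; linear_combination z1*ha0 - z0*ha1 + α*hDdef
    · simp; field_simp; linear_combination w0*ha1 - w1*ha0
  · refine chlat_map_pt φ (ChLat.point b hb) ?_
    rw [happ]; funext i; fin_cases i <;> simp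
  · refine chlat_map_pt φ (ChLat.point c hc) ?_
    rw [happ]; funext i; fin_cases i
    · simp; field_simp; linear_combination -hDdef
    · simp; field_simp; ring
  · refine chlat_map_pt φ (ChLat.point d hd) ?_
    rw [happ]; funext i; fin_cases i
    · simp; field_simp; ring
    · simp; field_simp; linear_combination -hDdef
  · refine chlat_map_pt φ (ChLat.point e he) ?_
    rw [happ]; funext i; fin_cases i
    · simp; field_simp; linear_combination z1*he0 - z0*he1 - u*hDdef
    · simp; field_simp; linear_combination w0*he1 - w1*he0 - v*hDdef
end
end
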